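/- arXiv:1605.02475 — 3 statements merged into one kernel-verified Lean document; each statement's English description precedes it below -/
import Mathlib

section
/- Let p ≥ 1 be an integer, let a : ℝ → ℝ be smooth and 2π-periodic with ∫₀^{2π} a(τ)dτ = 0, let b(τ) := ∫₀^τ a(s)ds, and let u₀ ∈ ℂ. For ε ∈ (0,1] define the initial data u_in^ε(τ) := u₀ ∑_{k=0}^{2p−1} (−iεb(τ))^k / k!, and let u^ε(t,τ) := e^{−iεb(τ)} e^{iεb(τ − t/ε²)} u_in^ε(τ − t/ε²) be the corresponding exact solution of the toy model. Then there exists a constant C > 0, depending only on p, a and u₀, such that for every ε ∈ (0,1], every t ≥ 0, every τ ∈ ℝ and every integer k with 0 ≤ k ≤ p, one has |∂_t^k u^ε(t,τ)| ≤ C; i.e., the time derivatives of u^ε up to order p are bounded uniformly with respect to ε. -/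
open Real Complex



lemma aux_one_le : (1 : WithTop ℕ∞) ≤ ((⊤:ℕ∞) : WithTop ℕ∞) := by exact_mod_cast le_top

lemma aux_lt (m : ℕ) : (m : WithTop ℕ∞) < ((⊤:ℕ∞) : WithTop ℕ∞) := by
  have : ((m:ℕ∞) : WithTop ℕ∞) < ((⊤:ℕ∞) : WithTop ℕ∞) := WithTop.coe_lt_coe.mpr (WithTop.coe_lt_top m)
  exact_mod_cast this

lemma periodic_deriv' {F : Type*} [NormedAddCommGroup F] [NormedSpace ℝ F]
    {f : ℝ → F} {c : ℝ} (h : Function.Periodic f c) : Function.Periodic (deriv f) c := by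
  intro x
  have h1 : deriv (fun y => f (y + c)) x = deriv f (x + c) := deriv_comp_add_const f c x
  rw [funext h] at h1
  exact h1.symm

lemma bounded_of_periodic {F : Type*} [NormedAddCommGroup F] {f : ℝ → F}
    (hf : Continuous f) (h : Function.Periodic f (2*π)) :
    ∃ C : ℝ, 0 ≤ C ∧ ∀ x, ‖f x‖ ≤ C := by
  obtain ⟨x₀, _, hmax⟩ := (isCompact_Icc (a := (0:ℝ)) (b := 2*π)).exists_isMaxOn
    ⟨0, by constructor <;> positivity⟩ hf.norm.continuousOn
  refine ⟨‖f x₀‖, norm_nonneg _, fun x => ?_⟩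
  obtain ⟨y, hy, hxy⟩ := h.exists_mem_Ico₀ Real.two_pi_pos x
  rw [hxy]
  exact hmax ⟨hy.1, hy.2.le⟩

lemma iteratedDeriv_const_mul'' {f : ℝ → ℂ} (hf : ContDiff ℝ ((⊤:ℕ∞) : WithTop ℕ∞) f) (c : ℂ) (n : ℕ) :
    iteratedDeriv n (fun x => c * f x) = fun x => c * iteratedDeriv n f x := by
  induction n with
  | zero => simp
  | succ n ih =>
    rw [iteratedDeriv_succ, ih, iteratedDeriv_succ]
    funext x
    exact deriv_const_mul c ((hf.differentiable_iteratedDeriv n (aux_lt n)) x)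

lemma norm_exp_I_mul_real (x : ℝ) : ‖Complex.exp (Complex.I * x)‖ = 1 := by
  rw [show (Complex.I * (x:ℂ)) = ((x:ℝ):ℂ) * Complex.I by ring]
  rw [Complex.norm_exp_ofReal_mul_I]

/-- An inductive family of "good" families of functions: sums of terms
`ε^m * g(σ) * exp(I ε b σ)` with `g` smooth and `2π`-periodic. -/
inductive GoodTM (b : ℝ → ℝ) : (ℝ → ℝ → ℂ) → Prop
  | atom (m : ℕ) (g : ℝ → ℂ) (hg : ContDiff ℝ ((⊤:ℕ∞) : WithTop ℕ∞) g)
      (hgp : Function.Periodic g (2*π)) :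
      GoodTM b (fun ε σ => (ε:ℂ)^m * g σ * Complex.exp (Complex.I * ε * b σ))
  | add {h₁ h₂ : ℝ → ℝ → ℂ} : GoodTM b h₁ → GoodTM b h₂ →
      GoodTM b (fun ε σ => h₁ ε σ + h₂ ε σ)
  | congr {h₁ h₂ : ℝ → ℝ → ℂ} (H : GoodTM b h₁) (e : ∀ ε σ, h₂ ε σ = h₁ ε σ) : GoodTM b h₂

lemma GoodTM.contDiff {b : ℝ → ℝ} {h : ℝ → ℝ → ℂ}
    (hbC : ContDiff ℝ ((⊤:ℕ∞) : WithTop ℕ∞) b) (H : GoodTM b h) (ε : ℝ) :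
    ContDiff ℝ ((⊤:ℕ∞) : WithTop ℕ∞) (fun σ => h ε σ) := by
  induction H with
  | atom m g hg hgp =>
    exact (contDiff_const.mul hg).mul
      ((contDiff_const.mul (Complex.ofRealCLM.contDiff.comp hbC)).cexp)
  | add H1 H2 ih1 ih2 => exact ih1.add ih2
  | @congr h₁ h₂ H e ih =>
    have heq : (fun σ => h₂ ε σ) = fun σ => h₁ ε σ := funext (e ε)
    rw [heq]; exact ih

lemma GoodTM.bound {b : ℝ → ℝ} {h : ℝ → ℝ → ℂ} (H : GoodTM b h) :
    ∃ C : ℝ, 0 ≤ C ∧ ∀ ε : ℝ, 0 ≤ ε → ε ≤ 1 → ∀ σ, ‖h ε σ‖ ≤ C := by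
  induction H with
  | atom m g hg hgp =>
    obtain ⟨C, hC0, hC⟩ := bounded_of_periodic hg.continuous hgp
    refine ⟨C, hC0, fun ε hε0 hε1 σ => ?_⟩
    have hexp : ‖Complex.exp (Complex.I * ε * b σ)‖ = 1 := by
      rw [show (Complex.I * (ε:ℂ) * ((b σ : ℝ):ℂ)) = Complex.I * ((ε * b σ : ℝ):ℂ) by
        push_cast; ring]
      exact norm_exp_I_mul_real _
    calc ‖(ε:ℂ)^m * g σ * Complex.exp (Complex.I * ε * b σ)‖
        = ‖(ε:ℂ)‖^m * ‖g σ‖ * ‖Complex.exp (Complex.I * ε * b σ)‖ := by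
          rw [norm_mul, norm_mul, norm_pow]
      _ = |ε|^m * ‖g σ‖ := by rw [hexp, Complex.norm_real, Real.norm_eq_abs, mul_one]
      _ ≤ 1 * ‖g σ‖ := by
          apply mul_le_mul_of_nonneg_right _ (norm_nonneg _)
          exact pow_le_one₀ (abs_nonneg ε) (by rwa [_root_.abs_of_nonneg hε0])
      _ = ‖g σ‖ := one_mul _
      _ ≤ C := hC σ
  | add H1 H2 ih1 ih2 =>
    obtain ⟨C1, hC10, hC1⟩ := ih1
    obtain ⟨C2, hC20, hC2⟩ := ih2
    exact ⟨C1 + C2, by positivity, fun ε h0 h1 σ =>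
      (norm_add_le _ _).trans (add_le_add (hC1 ε h0 h1 σ) (hC2 ε h0 h1 σ))⟩
  | congr H e ih =>
    obtain ⟨C, hC0, hC⟩ := ih
    exact ⟨C, hC0, fun ε h0 h1 σ => by rw [e ε σ]; exact hC ε h0 h1 σ⟩

lemma GoodTM.deriv {b : ℝ → ℝ} {h : ℝ → ℝ → ℂ}
    (hbC : ContDiff ℝ ((⊤:ℕ∞) : WithTop ℕ∞) b) (hbper : Function.Periodic b (2*π))
    (H : GoodTM b h) : GoodTM b (fun ε σ => _root_.deriv (fun x => h ε x) σ) := by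
  induction H with
  | atom m g hg hgp =>
    have hg' : ContDiff ℝ ((⊤:ℕ∞) : WithTop ℕ∞) (_root_.deriv g) := (contDiff_infty_iff_deriv.mp hg).2
    have hb' : ContDiff ℝ ((⊤:ℕ∞) : WithTop ℕ∞) (_root_.deriv b) := (contDiff_infty_iff_deriv.mp hbC).2
    have hgp' : Function.Periodic (_root_.deriv g) (2*π) := periodic_deriv' hgp
    have hbp' : Function.Periodic (_root_.deriv b) (2*π) := periodic_deriv' hbper
    refine GoodTM.congr (GoodTM.add (GoodTM.atom m (_root_.deriv g) hg' hgp')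
      (GoodTM.atom (m+1) (fun σ => Complex.I * (_root_.deriv b σ : ℝ) * g σ)
        ((contDiff_const.mul (Complex.ofRealCLM.contDiff.comp hb')).mul hg)
        (fun x => by simp only [hbp' x, hgp x]))) ?_
    intro ε σ
    have hgd : HasDerivAt g (_root_.deriv g σ) σ :=
      ((hg.differentiable (by simp)) σ).hasDerivAt
    have hbd : HasDerivAt b (_root_.deriv b σ) σ :=
      ((hbC.differentiable (by simp)) σ).hasDerivAt
    have h2 : HasDerivAt (fun x => Complex.I * ε * (b x : ℂ))
        (Complex.I * ε * ((_root_.deriv b σ : ℝ) : ℂ)) σ := by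
      simpa using (hbd.ofReal_comp).const_mul (Complex.I * ε)
    have h3 := h2.cexp
    have h4 := hgd.mul h3
    have h5 := h4.const_mul ((ε:ℂ)^m)
    have hfun : (fun x => (ε:ℂ)^m * g x * Complex.exp (Complex.I * ε * b x))
        = fun x => (ε:ℂ)^m * (g x * Complex.exp (Complex.I * ε * b x)) := by
      funext x; ring
    rw [hfun, (show HasDerivAt (fun x => (ε:ℂ)^m * (g x * Complex.exp (Complex.I * ε * b x))) _ σ from h5).deriv]
    push_cast
    ring
  | @add h₁ h₂ H1 H2 ih1 ih2 =>
    refine GoodTM.congr (ih1.add ih2) (fun ε σ => ?_)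
    have d1 : DifferentiableAt ℝ (fun x => h₁ ε x) σ :=
      ((H1.contDiff hbC ε).differentiable (by simp)) σ
    have d2 : DifferentiableAt ℝ (fun x => h₂ ε x) σ :=
      ((H2.contDiff hbC ε).differentiable (by simp)) σ
    exact deriv_fun_add d1 d2
  | @congr h₁ h₂ H e ih =>
    refine GoodTM.congr ih (fun ε σ => ?_)
    have : (fun x => h₂ ε x) = fun x => h₁ ε x := funext (e ε)
    rw [this]

lemma GoodTM.iteratedDerivFam {b : ℝ → ℝ} {h : ℝ → ℝ → ℂ}
    (hbC : ContDiff ℝ ((⊤:ℕ∞) : WithTop ℕ∞) b) (hbper : Function.Periodic b (2*π))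
    (H : GoodTM b h) (j : ℕ) :
    GoodTM b (fun ε σ => iteratedDeriv j (fun x => h ε x) σ) := by
  induction j with
  | zero => exact GoodTM.congr H (fun ε σ => by simp)
  | succ j ih =>
    exact GoodTM.congr (ih.deriv hbC hbper) (fun ε σ => by rw [iteratedDeriv_succ])


/-- With the truncated well-prepared initial data
`u_in^ε(τ) = u₀ ∑_{k=0}^{2p−1} (−iεb(τ))^k / k!`, the exact solution
`u^ε(t,τ) = e^{−iεb(τ)} e^{iεb(τ−t/ε²)} u_in^ε(τ−t/ε²)` of the toy model has its
time derivatives up to order `p` bounded uniformly with respect to `ε ∈ (0,1]`. -/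
theorem stmt_4 (p : ℕ) (hp : 1 ≤ p)
    (a : ℝ → ℝ) (ha : ContDiff ℝ (⊤ : ℕ∞) a) (haper : Function.Periodic a (2 * π))
    (hamean : (∫ τ in (0:ℝ)..(2 * π), a τ) = 0)
    (b : ℝ → ℝ) (hb : ∀ τ, b τ = ∫ s in (0:ℝ)..τ, a s)
    (u₀ : ℂ)
    (uin : ℝ → ℝ → ℂ)
    (huin : ∀ (ε : ℝ) (τ : ℝ), uin ε τ =
      u₀ * ∑ k ∈ Finset.range (2 * p), (-Complex.I * ε * b τ) ^ k / (Nat.factorial k))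
    (u : ℝ → ℝ → ℝ → ℂ)
    (hu : ∀ (ε : ℝ) (t τ : ℝ), u ε t τ = Complex.exp (-Complex.I * ε * b τ) *
      Complex.exp (Complex.I * ε * b (τ - t / ε ^ 2)) * uin ε (τ - t / ε ^ 2)) :
    ∃ C : ℝ, 0 < C ∧ ∀ ε : ℝ, 0 < ε → ε ≤ 1 → ∀ t : ℝ, 0 ≤ t → ∀ τ : ℝ,
      ∀ k : ℕ, k ≤ p → ‖iteratedDeriv k (fun s => u ε s τ) t‖ ≤ C := by
  have hac : Continuous a := ha.continuous
  -- derivative of b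
  have hbd : ∀ τ, HasDerivAt b (a τ) τ := by
    intro τ
    have h0 : HasDerivAt (fun x => ∫ s in (0:ℝ)..x, a s) (a τ) τ :=
      intervalIntegral.integral_hasDerivAt_right (hac.intervalIntegrable _ _)
        (hac.stronglyMeasurableAtFilter _ _) hac.continuousAt
    have hbe : b = fun x => ∫ s in (0:ℝ)..x, a s := funext hb
    rw [hbe]; exact h0
  have hderivb : _root_.deriv b = a := funext fun τ => (hbd τ).deriv
  have hbC : ContDiff ℝ ((⊤:ℕ∞) : WithTop ℕ∞) b := by
    rw [contDiff_infty_iff_deriv]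
    exact ⟨fun τ => (hbd τ).differentiableAt, by rw [hderivb]; exact ha.of_le (by simp)⟩
  have hbper : Function.Periodic b (2*π) := by
    intro x
    have hint : ∀ u v : ℝ, IntervalIntegrable a MeasureTheory.volume u v :=
      fun u v => hac.intervalIntegrable u v
    have h1 : (∫ s in (0:ℝ)..(x + 2*π), a s)
        = (∫ s in (0:ℝ)..x, a s) + ∫ s in x..(x+2*π), a s :=
      (intervalIntegral.integral_add_adjacent_intervals (hint 0 x) (hint x _)).symm
    have h2 : (∫ s in x..(x+2*π), a s) = ∫ s in (0:ℝ)..(0+2*π), a s :=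
      haper.intervalIntegral_add_eq x 0
    rw [hb, hb, h1, h2, zero_add, hamean, add_zero]
  obtain ⟨Cb, hCb0, hCb⟩ := bounded_of_periodic hbC.continuous hbper
  have h2p : 2*p - 1 + 1 = 2*p := by omega
  -- the entire function S
  set S : ℂ → ℂ := fun x => ∑ k ∈ Finset.range (2*p), x^k / (Nat.factorial k : ℂ) with hSdef
  have hS : ∀ x : ℂ, HasDerivAt S
      (S x - x^(2*p-1) / ((Nat.factorial (2*p-1) : ℂ))) x := by
    intro x
    have hsum := HasDerivAt.sum (fun k (_ : k ∈ Finset.range (2*p)) =>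
      (hasDerivAt_pow k x).div_const ((Nat.factorial k : ℂ)))
    have e1 : ∑ k ∈ Finset.range (2*p), (k:ℂ) * x^(k-1) / (Nat.factorial k : ℂ)
        = ∑ k ∈ Finset.range (2*p-1), x^k / (Nat.factorial k : ℂ) := by
      rw [← h2p, Finset.sum_range_succ']
      simp only [Nat.cast_zero, zero_mul, zero_div, add_zero]
      refine Finset.sum_congr rfl (fun i _ => ?_)
      have hfac : ((Nat.factorial (i+1) : ℂ)) = ((i:ℂ)+1) * (Nat.factorial i : ℂ) := by
        push_cast [Nat.factorial_succ]; ring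
      have hcast : ((i+1:ℕ):ℂ) = (i:ℂ)+1 := by push_cast; ring
      have hne : ((i:ℂ)+1) ≠ 0 := by
        have : ((i:ℂ)+1) = ((i+1:ℕ):ℂ) := by push_cast; ring
        rw [this]
        exact Nat.cast_ne_zero.mpr (Nat.succ_ne_zero i)
      rw [hfac, hcast, Nat.add_sub_cancel, mul_div_mul_left _ _ hne]
    have e2 : S x = (∑ k ∈ Finset.range (2*p-1), x^k / (Nat.factorial k : ℂ))
        + x^(2*p-1)/(Nat.factorial (2*p-1):ℂ) := by
      simp only [hSdef]
      conv_lhs => rw [← h2p]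
      rw [Finset.sum_range_succ]
    convert hsum using 1
    · exact rfl
    · exact rfl
    · funext y; simp only [hSdef, Finset.sum_apply]
    rw [e1, e2]; ring
  have huinS : ∀ ε σ, uin ε σ = u₀ * S (-Complex.I * ε * b σ) := by
    intro ε σ; rw [huin]
  -- ψ and its goodness
  set c₀ : ℂ := u₀ * Complex.I / (Nat.factorial (2*p-1) : ℂ) with hc₀
  set g₀ : ℝ → ℂ := fun σ => c₀ * ((a σ : ℂ) * (-Complex.I * (b σ : ℂ))^(2*p-1)) with hg₀
  set ψ : ℝ → ℝ → ℂ := fun ε σ => g₀ σ * Complex.exp (Complex.I * ε * b σ) with hψ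
  have hoa : ContDiff ℝ ((⊤:ℕ∞) : WithTop ℕ∞) (fun σ => ((a σ : ℝ):ℂ)) :=
    Complex.ofRealCLM.contDiff.comp (ha.of_le (by simp))
  have hob : ContDiff ℝ ((⊤:ℕ∞) : WithTop ℕ∞) (fun σ => ((b σ : ℝ):ℂ)) :=
    Complex.ofRealCLM.contDiff.comp hbC
  have hg₀C : ContDiff ℝ ((⊤:ℕ∞) : WithTop ℕ∞) g₀ := by
    rw [hg₀]
    exact contDiff_const.mul (hoa.mul ((contDiff_const.mul hob).pow _))
  have hg₀per : Function.Periodic g₀ (2*π) := by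
    intro x
    simp only [hg₀, haper x, hbper x]
  have hψGood : GoodTM b ψ := by
    refine GoodTM.congr (GoodTM.atom 0 g₀ hg₀C hg₀per) (fun ε σ => ?_)
    rw [hψ]; rw [pow_zero, one_mul]
  -- derivative of F ε
  have hfder : ∀ (ε : ℝ) σ, HasDerivAt (fun x => Complex.exp (Complex.I*ε*b x) * uin ε x)
      ((ε:ℂ)^(2*p) * ψ ε σ) σ := by
    intro ε σ
    have hx : HasDerivAt (fun x => -Complex.I * ε * ((b x : ℝ) : ℂ))
        (-Complex.I * ε * ((a σ : ℝ):ℂ)) σ := by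
      simpa using ((hbd σ).ofReal_comp).const_mul (-Complex.I * (ε:ℂ))
    have hSx : HasDerivAt (fun x => S (-Complex.I * ε * ((b x:ℝ):ℂ)))
        ((-Complex.I * ε * ((a σ:ℝ):ℂ)) *
          (S (-Complex.I * ε * ((b σ:ℝ):ℂ)) -
            (-Complex.I * ε * ((b σ:ℝ):ℂ))^(2*p-1) / ((Nat.factorial (2*p-1) : ℂ)))) σ := by
      have := ((hS (-Complex.I * ε * ((b σ:ℝ):ℂ))).hasFDerivAt.restrictScalars ℝ).comp_hasDerivAt σ hx
      simpa [Function.comp_def] using this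
    have hExp : HasDerivAt (fun x => Complex.exp (Complex.I*ε*b x))
        (Complex.exp (Complex.I*ε*b σ) * (Complex.I*ε*((a σ:ℝ):ℂ))) σ := by
      have h2 : HasDerivAt (fun x => Complex.I * ε * ((b x:ℝ):ℂ))
          (Complex.I * ε * ((a σ:ℝ):ℂ)) σ := by
        simpa using ((hbd σ).ofReal_comp).const_mul (Complex.I * (ε:ℂ))
      exact h2.cexp
    have hprod := hExp.mul (hSx.const_mul u₀)
    have hfun : (fun x => Complex.exp (Complex.I*ε*b x) * uin ε x)
        = fun x => Complex.exp (Complex.I*ε*b x) * (u₀ * S (-Complex.I*ε*((b x:ℝ):ℂ))) := by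
      funext x; rw [huinS]
    rw [hfun]
    convert hprod using 1
    · exact rfl
    · exact rfl
    have hxpow : (-Complex.I*(ε:ℂ)*((b σ:ℝ):ℂ))^(2*p-1)
        = (ε:ℂ)^(2*p-1) * (-Complex.I*((b σ:ℝ):ℂ))^(2*p-1) := by
      rw [show (-Complex.I*(ε:ℂ)*((b σ:ℝ):ℂ)) = (ε:ℂ) * (-Complex.I*((b σ:ℝ):ℂ)) by ring,
        mul_pow]
    have hεpow : (ε:ℂ)^(2*p) = (ε:ℂ)^(2*p-1) * ε := by rw [← pow_succ, h2p]
    rw [hψ, hg₀, hc₀, hεpow, hxpow]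
    ring
  -- uniform bounds on iterated derivatives of ψ
  have hMj : ∀ j : ℕ, ∃ M, 0 ≤ M ∧ ∀ ε : ℝ, 0 ≤ ε → ε ≤ 1 → ∀ σ,
      ‖iteratedDeriv j (fun x => ψ ε x) σ‖ ≤ M :=
    fun j => (hψGood.iteratedDerivFam hbC hbper j).bound
  choose M hM0 hM using hMj
  have hMtot0 : 0 ≤ ∑ j ∈ Finset.range p, M j := Finset.sum_nonneg (fun j _ => hM0 j)
  have hu0exp : (0:ℝ) ≤ ‖u₀‖ * Real.exp Cb := by positivity
  refine ⟨‖u₀‖ * Real.exp Cb + (∑ j ∈ Finset.range p, M j) + 1, by linarith, ?_⟩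
  intro ε hε0 hε1 t ht τ k hk
  have hεne : ε ≠ 0 := ne_of_gt hε0
  -- the function F and its smoothness
  set F : ℝ → ℂ := fun σ => Complex.exp (Complex.I*ε*b σ) * uin ε σ with hF
  have hFC : ContDiff ℝ ((⊤:ℕ∞) : WithTop ℕ∞) F := by
    have hFeq : F = fun σ => Complex.exp (Complex.I*ε*b σ)
        * (u₀ * S (-Complex.I*ε*((b σ:ℝ):ℂ))) := by
      funext σ; simp only [hF]; rw [huinS]
    rw [hFeq]
    refine ((contDiff_const.mul hob).cexp).mul (contDiff_const.mul ?_)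
    rw [hSdef]
    exact ContDiff.sum (fun k _ => ((contDiff_const.mul hob).pow k).div_const _)
  -- the iterated time-derivative formula
  set c1 : ℂ := Complex.exp (-Complex.I*ε*b τ) with hc1
  set e2 : ℂ := ((-((ε:ℝ)^2)⁻¹ : ℝ) : ℂ) with he2
  have hclaim : ∀ m : ℕ, iteratedDeriv m (fun s' => u ε s' τ)
      = fun s => c1 * e2^m * iteratedDeriv m F (τ - s/ε^2) := by
    intro m
    induction m with
    | zero =>
      funext s
      simp only [iteratedDeriv_zero, pow_zero, mul_one, hF, hc1]
      rw [hu]; ring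
    | succ m ih =>
      rw [iteratedDeriv_succ, ih]
      funext s
      have hinner : HasDerivAt (fun s' : ℝ => τ - s'/ε^2) (-((ε:ℝ)^2)⁻¹) s := by
        simpa [one_div] using ((hasDerivAt_id s).div_const (ε^2)).const_sub τ
      have hG : HasDerivAt (iteratedDeriv m F)
          (iteratedDeriv (m+1) F (τ - s/ε^2)) (τ - s/ε^2) := by
        have hd := hFC.differentiable_iteratedDeriv m (aux_lt m)
        have h' := (hd (τ - s/ε^2)).hasDerivAt
        rwa [← iteratedDeriv_succ] at h'
      have hcomp : HasDerivAt (fun s' => iteratedDeriv m F (τ - s'/ε^2))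
          ((-((ε:ℝ)^2)⁻¹) • iteratedDeriv (m+1) F (τ - s/ε^2)) s := by have := hG.scomp s hinner; exact this
      have hfull := hcomp.const_mul (c1 * e2^m)
      rw [hfull.deriv, Complex.real_smul, he2]
      push_cast
      ring
  have hnc1 : ‖c1‖ = 1 := by
    rw [hc1, show (-Complex.I*(ε:ℂ)*((b τ:ℝ):ℂ)) = Complex.I * ((-(ε * b τ):ℝ):ℂ) by
      push_cast; ring]
    exact norm_exp_I_mul_real _
  rcases Nat.eq_zero_or_pos k with hk0 | hkpos
  · -- k = 0
    subst hk0
    have h0 := congrFun (hclaim 0) t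
    rw [h0]
    simp only [pow_zero, mul_one, iteratedDeriv_zero, hF]
    have hnexp : ‖Complex.exp (Complex.I*ε*((b (τ - t/ε^2):ℝ):ℂ))‖ = 1 := by
      rw [show (Complex.I*(ε:ℂ)*((b (τ - t/ε^2):ℝ):ℂ))
          = Complex.I * (((ε * b (τ - t/ε^2)):ℝ):ℂ) by push_cast; ring]
      exact norm_exp_I_mul_real _
    have huin_bound : ‖uin ε (τ - t/ε^2)‖ ≤ ‖u₀‖ * Real.exp Cb := by
      rw [huin, norm_mul]
      refine mul_le_mul_of_nonneg_left ?_ (norm_nonneg u₀)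
      calc ‖∑ k ∈ Finset.range (2*p), (-Complex.I * ε * ((b (τ - t/ε^2):ℝ):ℂ))^k
            / (Nat.factorial k : ℂ)‖
          ≤ ∑ k ∈ Finset.range (2*p), ‖(-Complex.I * ε * ((b (τ - t/ε^2):ℝ):ℂ))^k
            / (Nat.factorial k : ℂ)‖ := norm_sum_le _ _
        _ ≤ ∑ k ∈ Finset.range (2*p), Cb^k / (Nat.factorial k : ℝ) := by
            refine Finset.sum_le_sum (fun k _ => ?_)
            have h1 : ‖-Complex.I * ε * ((b (τ - t/ε^2):ℝ):ℂ)‖ ≤ Cb := by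
              rw [norm_mul, norm_mul, norm_neg, Complex.norm_I, one_mul,
                Complex.norm_real, Complex.norm_real]
              calc ‖ε‖ * ‖b (τ - t/ε^2)‖ ≤ 1 * Cb :=
                    mul_le_mul (by rwa [Real.norm_eq_abs, _root_.abs_of_nonneg hε0.le])
                      (hCb _) (norm_nonneg _) zero_le_one
                _ = Cb := one_mul _
            rw [norm_div, norm_pow, Complex.norm_natCast]
            gcongr
        _ ≤ Real.exp Cb := Real.sum_le_exp_of_nonneg hCb0 _
    calc ‖c1 * (Complex.exp (Complex.I*ε*((b (τ - t/ε^2):ℝ):ℂ)) * uin ε (τ - t/ε^2))‖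
        = ‖uin ε (τ - t/ε^2)‖ := by
          rw [norm_mul, norm_mul, hnc1, hnexp, one_mul, one_mul]
      _ ≤ ‖u₀‖ * Real.exp Cb := huin_bound
      _ ≤ ‖u₀‖ * Real.exp Cb + (∑ j ∈ Finset.range p, M j) + 1 := by linarith
  · -- 1 ≤ k
    have hk1 : k - 1 + 1 = k := Nat.succ_pred_eq_of_pos hkpos
    have hψC : ContDiff ℝ ((⊤:ℕ∞) : WithTop ℕ∞) (fun x => ψ ε x) := hψGood.contDiff hbC ε
    have hDF : _root_.deriv F = fun σ => (ε:ℂ)^(2*p) * ψ ε σ := by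
      funext σ
      exact (hfder ε σ).deriv
    have hFk : iteratedDeriv k F
        = fun σ => (ε:ℂ)^(2*p) * iteratedDeriv (k-1) (fun x => ψ ε x) σ := by
      conv_lhs => rw [← hk1]
      rw [iteratedDeriv_succ', hDF]
      exact iteratedDeriv_const_mul'' hψC ((ε:ℂ)^(2*p)) (k-1)
    have h0 := congrFun (hclaim k) t
    rw [h0, hFk]
    have hne2 : ‖e2‖ = ((ε:ℝ)^2)⁻¹ := by
      rw [he2, Complex.norm_real, Real.norm_eq_abs, abs_neg, abs_inv,
        _root_.abs_of_nonneg (by positivity : (0:ℝ) ≤ ε^2)]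
    have hnε : ‖(ε:ℂ)‖ = ε := by
      rw [Complex.norm_real, Real.norm_eq_abs, _root_.abs_of_nonneg hε0.le]
    simp only [norm_mul, norm_pow, hnc1, hne2, hnε, one_mul]
    have hX := hM (k-1) ε hε0.le hε1 (τ - t/ε^2)
    have hpow : (((ε:ℝ)^2)⁻¹)^k * ε^(2*p) ≤ 1 := by
      have h1 : (((ε:ℝ)^2)⁻¹)^k = (ε^(2*k))⁻¹ := by rw [inv_pow, ← pow_mul]
      have h2 : (ε:ℝ)^(2*p) ≤ ε^(2*k) := pow_le_pow_of_le_one hε0.le hε1 (by omega)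
      rw [h1]
      calc (ε^(2*k))⁻¹ * ε^(2*p) ≤ (ε^(2*k))⁻¹ * ε^(2*k) := by
            exact mul_le_mul_of_nonneg_left h2 (by positivity)
        _ = 1 := inv_mul_cancel₀ (pow_ne_zero _ hεne)
    have hfac : (((ε:ℝ)^2)⁻¹)^k * (ε^(2*p)
        * ‖iteratedDeriv (k-1) (fun x => ψ ε x) (τ - t/ε^2)‖) ≤ M (k-1) := by
      calc (((ε:ℝ)^2)⁻¹)^k * (ε^(2*p) * ‖iteratedDeriv (k-1) (fun x => ψ ε x) (τ - t/ε^2)‖)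
          = ((((ε:ℝ)^2)⁻¹)^k * ε^(2*p)) * ‖iteratedDeriv (k-1) (fun x => ψ ε x) (τ - t/ε^2)‖ := by
            ring
        _ ≤ 1 * M (k-1) := mul_le_mul hpow hX (norm_nonneg _) zero_le_one
        _ = M (k-1) := one_mul _
    have hMle : M (k-1) ≤ ∑ j ∈ Finset.range p, M j :=
      Finset.single_le_sum (fun j _ => hM0 j) (Finset.mem_range.mpr (by omega))
    linarith
end

section
/- Let ε, Δt > 0 and μ ∈ ℝ. Suppose V : ℝ → ℂ² is C¹ and W : ℝ → ℂ² satisfies Q(V)(τ) = W(τ) for all τ, where Q(V)(τ) := V(τ) + (Δt/ε) iμ A(τ) V(τ) + (Δt/ε²) V′(τ). Set D(τ) := diag(e^{−iτ}, e^{iτ}) and Z(τ) := D(τ) V(τ). Then Z is C¹ and satisfies Z(τ) + iΩ Z(τ) + (Δt/ε²) Z′(τ) = D(τ) W(τ) for all τ, where Ω is the real symmetric matrix [[Δt/ε², μΔt/ε],[μΔt/ε, −Δt/ε²]]. -/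
open Real Complex Matrix

/-- `A(τ) = [[0, e^{2iτ}],[e^{−2iτ}, 0]]`. -/
noncomputable def Amat (τ : ℝ) : Matrix (Fin 2) (Fin 2) ℂ :=
  !![0, Complex.exp (2 * Complex.I * τ); Complex.exp (-2 * Complex.I * τ), 0]

/-- The diagonal matrix `D(τ) = diag(e^{−iτ}, e^{iτ})`. -/
noncomputable def Dm (τ : ℝ) : Matrix (Fin 2) (Fin 2) ℂ :=
  !![Complex.exp (-Complex.I * τ), 0; 0, Complex.exp (Complex.I * τ)]

/-!
Write `σ₁ = [[0,1],[1,0]]`, `σ₃ = diag(1,-1)`. The gauge `D(τ)` satisfies `D' = -iσ₃ D` and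
conjugates the coupling into a constant matrix, `D A = σ₁ D`. Hence
`(Δt/ε²) Z' = -i(Δt/ε²) σ₃ Z + (Δt/ε²) D V'`, whose first term cancels the `σ₃`-part of
`iΩ = i(Δt/ε²) σ₃ + i(μΔt/ε) σ₁`, while the `σ₁`-part is exactly `D` applied to the coupling term
`(Δt/ε) iμ A V` of `Q(V)`.
-/

section DiagonalPhase

variable {ι : Type*} [Fintype ι] [DecidableEq ι] (s : ι → ℂ)

theorem hasDerivAt_diagonal_exp_mulVec {V : ℝ → ι → ℂ} {V' : ι → ℂ} {τ : ℝ}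
    (hV : HasDerivAt V V' τ) :
    HasDerivAt (fun t : ℝ => diagonal (fun i => cexp (s i * t)) *ᵥ V t)
      (diagonal s *ᵥ (diagonal (fun i => cexp (s i * τ)) *ᵥ V τ) +
        diagonal (fun i => cexp (s i * τ)) *ᵥ V') τ := by
  refine hasDerivAt_pi.mpr fun i => ?_
  simp only [Pi.add_apply, mulVec_diagonal]
  have hexp : HasDerivAt (fun t : ℝ => cexp (s i * t)) (cexp (s i * τ) * (s i * 1)) τ :=
    ((hasDerivAt_id τ).ofReal_comp.const_mul (s i)).cexp
  exact (hexp.mul (hasDerivAt_pi.mp hV i)).congr_deriv (by ring)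

theorem contDiff_diagonal_exp_mulVec {n : WithTop ℕ∞} {V : ℝ → ι → ℂ}
    (hV : ContDiff ℝ n V) :
    ContDiff ℝ n (fun t : ℝ => diagonal (fun i => cexp (s i * t)) *ᵥ V t) := by
  refine contDiff_pi.mpr fun i => ?_
  simp only [mulVec_diagonal]
  exact (contDiff_exp.comp (contDiff_const.mul ofRealCLM.contDiff)).mul (contDiff_pi.mp hV i)

end DiagonalPhase

def pauliX : Matrix (Fin 2) (Fin 2) ℂ := !![0, 1; 1, 0]

def pauliZ : Matrix (Fin 2) (Fin 2) ℂ := !![1, 0; 0, -1]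

theorem Dm_eq_diagonal (τ : ℝ) : Dm τ = diagonal (fun i => cexp (![-I, I] i * τ)) := by
  ext i j
  fin_cases i <;> fin_cases j <;> simp [Dm]

theorem diagonal_neg_I_I : diagonal ![-I, I] = -I • pauliZ := by
  ext i j
  fin_cases i <;> fin_cases j <;> simp [pauliZ]

theorem Dm_mul_Amat (τ : ℝ) : Dm τ * Amat τ = pauliX * Dm τ := by
  have h₁ : cexp (-(I * τ)) * cexp (2 * I * τ) = cexp (I * τ) := by
    rw [← Complex.exp_add]; ring_nf
  have h₂ : cexp (I * τ) * cexp (-(2 * I * τ)) = cexp (-(I * τ)) := by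
    rw [← Complex.exp_add]; ring_nf
  ext i j
  fin_cases i <;> fin_cases j <;> simp [Dm, Amat, pauliX, h₁, h₂]

theorem map_ofReal_eq_smul_pauliZ_add_smul_pauliX (a b : ℝ) :
    (!![a, b; b, -a] : Matrix (Fin 2) (Fin 2) ℝ).map ofReal =
      (a : ℂ) • pauliZ + (b : ℂ) • pauliX := by
  ext i j
  fin_cases i <;> fin_cases j <;> simp [pauliZ, pauliX]

theorem stmt_13_general (ε Δt : ℝ) (μ : ℝ)
    (V : ℝ → Fin 2 → ℂ) (hV : ContDiff ℝ 1 V)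
    (W : ℝ → Fin 2 → ℂ)
    (hQ : ∀ τ : ℝ,
      V τ + ((Δt / ε : ℝ) : ℂ) • (Complex.I * (μ : ℂ)) • (Amat τ).mulVec (V τ) +
        ((Δt / ε ^ 2 : ℝ) : ℂ) • deriv V τ = W τ)
    (Z : ℝ → Fin 2 → ℂ) (hZ : ∀ τ, Z τ = (Dm τ).mulVec (V τ))
    (Ω : Matrix (Fin 2) (Fin 2) ℝ)
    (hΩ : Ω = !![Δt / ε ^ 2, μ * Δt / ε; μ * Δt / ε, -(Δt / ε ^ 2)]) :
    ContDiff ℝ 1 Z ∧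
      ∀ τ : ℝ,
        Z τ + Complex.I • (Ω.map Complex.ofReal).mulVec (Z τ) +
            ((Δt / ε ^ 2 : ℝ) : ℂ) • deriv Z τ =
          (Dm τ).mulVec (W τ) := by
  have hZD : Z = fun t : ℝ => diagonal (fun i => cexp (![-I, I] i * t)) *ᵥ V t := by
    ext1 t; rw [hZ, Dm_eq_diagonal]
  refine ⟨hZD ▸ contDiff_diagonal_exp_mulVec _ hV, fun τ => ?_⟩
  have hZ' : deriv Z τ = (-I • pauliZ) *ᵥ Z τ + Dm τ *ᵥ deriv V τ := by
    have hderiv := hasDerivAt_diagonal_exp_mulVec ![-I, I]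
      (hV.differentiable one_ne_zero τ).hasDerivAt
    rw [← hZD, ← Dm_eq_diagonal, ← hZ τ, diagonal_neg_I_I] at hderiv
    exact hderiv.deriv
  rw [← hQ, hΩ, map_ofReal_eq_smul_pauliZ_add_smul_pauliX, hZ']
  simp only [mulVec_add, mulVec_smul, add_mulVec, smul_mulVec, ← hZ τ]
  rw [mulVec_mulVec, Dm_mul_Amat, ← mulVec_mulVec, ← hZ τ]
  push_cast
  module

/-- If `Q(V) = W` where
`Q(V)(τ) = V(τ) + (Δt/ε) iμ A(τ) V(τ) + (Δt/ε²) V′(τ)`, then `Z(τ) = D(τ)V(τ)`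
is `C¹` and satisfies `Z + iΩZ + (Δt/ε²)Z′ = D W`, with
`Ω = [[Δt/ε², μΔt/ε],[μΔt/ε, −Δt/ε²]]`. -/
theorem stmt_13 (ε Δt : ℝ) (hε : 0 < ε) (hΔt : 0 < Δt) (μ : ℝ)
    (V : ℝ → Fin 2 → ℂ) (hV : ContDiff ℝ 1 V)
    (W : ℝ → Fin 2 → ℂ)
    (hQ : ∀ τ : ℝ,
      V τ + ((Δt / ε : ℝ) : ℂ) • (Complex.I * (μ : ℂ)) • (Amat τ).mulVec (V τ) +
        ((Δt / ε ^ 2 : ℝ) : ℂ) • deriv V τ = W τ)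
    (Z : ℝ → Fin 2 → ℂ) (hZ : ∀ τ, Z τ = (Dm τ).mulVec (V τ))
    (Ω : Matrix (Fin 2) (Fin 2) ℝ)
    (hΩ : Ω = !![Δt / ε ^ 2, μ * Δt / ε; μ * Δt / ε, -(Δt / ε ^ 2)]) :
    ContDiff ℝ 1 Z ∧
      ∀ τ : ℝ,
        Z τ + Complex.I • (Ω.map Complex.ofReal).mulVec (Z τ) +
            ((Δt / ε ^ 2 : ℝ) : ℂ) • deriv Z τ =
          (Dm τ).mulVec (W τ) :=
  stmt_13_general ε Δt μ V hV W hQ Z hZ Ω hΩ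
end

section
/- Let ν > 0, let Ω be a real symmetric 2×2 matrix, let W : ℝ → ℂ² be continuous and 2π-periodic, and let Z : ℝ → ℂ² be C¹ and 2π-periodic with Z(τ) + iΩ Z(τ) + ν Z′(τ) = W(τ) for all τ ∈ ℝ. Then for every τ ∈ ℝ, ‖Z(τ)‖ ≤ sup_{s ∈ [0,2π]} ‖W(s)‖, where ‖·‖ denotes the Euclidean norm on ℂ². -/
open Real Complex Matrix

/-- The Euclidean norm on `ℂ²`. -/
noncomputable def enorm2 (v : Fin 2 → ℂ) : ℝ :=
  Real.sqrt (Complex.normSq (v 0) + Complex.normSq (v 1))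

/-!
Maximum principle: the periodic function `‖Z‖` attains its maximum at some `τ₀`, where
`Re ⟪Z, Z′⟫ = 0`. Since `Ω` is symmetric, `⟪Z, iΩZ⟫` is purely imaginary, so pairing the
equation with `Z(τ₀)` gives `‖Z(τ₀)‖² = Re ⟪Z(τ₀), W(τ₀)⟫ ≤ ‖Z(τ₀)‖ ‖W(τ₀)‖`.
-/

open Function Set WithLp

theorem Function.Periodic.exists_mem_Icc_isMaxOn {α : Type*} [LinearOrder α]
    [TopologicalSpace α] [OrderClosedTopology α] {g : ℝ → α} {c : ℝ} (hg : Periodic g c)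
    (hc : 0 < c) (hgc : Continuous g) : ∃ t₀ ∈ Icc 0 c, IsMaxOn g univ t₀ := by
  obtain ⟨t₀, ht₀, hmax⟩ :=
    isCompact_Icc.exists_isMaxOn (nonempty_Icc.2 hc.le) hgc.continuousOn
  refine ⟨t₀, ht₀, fun t _ => ?_⟩
  obtain ⟨s, hs, hts⟩ := hg.exists_mem_Ico₀ hc t
  simpa [hts] using hmax (Ico_subset_Icc_self hs)

theorem IsMaxOn.inner_eq_zero_of_hasDerivAt {F : Type*} [NormedAddCommGroup F]
    [InnerProductSpace ℝ F] {f : ℝ → F} {f' : F} {t : ℝ}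
    (hmax : IsMaxOn (‖f ·‖) univ t) (hf : HasDerivAt f f' t) : inner ℝ (f t) f' = 0 := by
  have hsq : IsLocalMax (‖f ·‖ ^ 2) t := Filter.Eventually.of_forall fun s =>
    pow_le_pow_left₀ (norm_nonneg _) (hmax (mem_univ s)) 2
  simpa using hsq.hasDerivAt_eq_zero hf.norm_sq

section ComplexInnerProductSpace

variable {E : Type*} [NormedAddCommGroup E] [InnerProductSpace ℂ E]

theorem IsMaxOn.re_inner_eq_zero_of_hasDerivAt {f : ℝ → E} {f' : E} {t : ℝ}
    (hmax : IsMaxOn (‖f ·‖) univ t) (hf : HasDerivAt f f' t) : re (inner ℂ (f t) f') = 0 := by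
  -- `E` as a real inner product space, where `⟪x, y⟫_ℝ = re ⟪x, y⟫_ℂ` holds definitionally
  let := InnerProductSpace.complexToReal (G := E)
  exact hmax.inner_eq_zero_of_hasDerivAt hf

theorem norm_le_of_sq_le_re_inner {x y : E} (h : ‖x‖ ^ 2 ≤ re (inner ℂ x y)) : ‖x‖ ≤ ‖y‖ := by
  have hcs := re_inner_le_norm (𝕜 := ℂ) x y
  rw [RCLike.re_to_complex] at hcs
  nlinarith [norm_nonneg x, norm_nonneg y]

theorem LinearMap.IsSymmetric.re_inner_add_I_smul_self {T : E →ₗ[ℂ] E} (hT : T.IsSymmetric)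
    (z : E) : re (inner ℂ z (z + I • T z)) = ‖z‖ ^ 2 := by
  have him := hT.im_inner_self_apply z
  rw [RCLike.im_to_complex] at him
  rw [inner_add_right, inner_smul_right, add_re, I_mul_re, him, neg_zero, add_zero,
    inner_self_eq_norm_sq_to_K]
  norm_cast

theorem exists_norm_le_of_periodic_solution {T : E →ₗ[ℂ] E} (hT : T.IsSymmetric) (ν : ℝ)
    {c : ℝ} (hc : 0 < c) {Z Z' W : ℝ → E} (hZ : ∀ t, HasDerivAt Z (Z' t) t)
    (hZper : Periodic Z c) (heq : ∀ t, Z t + I • T (Z t) + ν • Z' t = W t) :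
    ∃ t₀ ∈ Icc 0 c, ∀ t, ‖Z t‖ ≤ ‖W t₀‖ := by
  have hZc : Continuous Z := continuous_iff_continuousAt.2 fun t => (hZ t).continuousAt
  obtain ⟨t₀, ht₀, hmax⟩ := (hZper.comp norm).exists_mem_Icc_isMaxOn hc hZc.norm
  refine ⟨t₀, ht₀, fun t => (hmax (mem_univ t)).trans (norm_le_of_sq_le_re_inner ?_)⟩
  have hZ'₀ := hmax.re_inner_eq_zero_of_hasDerivAt (hZ t₀)
  rw [← heq, inner_add_right, add_re, hT.re_inner_add_I_smul_self, ← Complex.coe_smul,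
    inner_smul_right, re_ofReal_mul, hZ'₀, mul_zero, add_zero]

end ComplexInnerProductSpace

theorem enorm2_eq_norm_toLp (v : Fin 2 → ℂ) : enorm2 v = ‖toLp 2 v‖ := by
  simp [enorm2, EuclideanSpace.norm_eq, Fin.sum_univ_two, Complex.sq_norm]

theorem Matrix.IsSymm.isSymmetric_toEuclideanLin_map_ofReal {n : Type*} [Fintype n]
    [DecidableEq n] {A : Matrix n n ℝ} (hA : A.IsSymm) :
    (toEuclideanLin (A.map ofReal)).IsSymmetric :=
  isSymmetric_toEuclideanLin_iff.2
    ((isHermitian_iff_isSymm.2 hA).map _ fun _ => (conj_ofReal _).symm)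

theorem stmt_14_general (ν : ℝ)
    (Ω : Matrix (Fin 2) (Fin 2) ℝ) (hΩ : Ω.IsSymm)
    (W : ℝ → Fin 2 → ℂ) (hWc : Continuous W)
    (Z : ℝ → Fin 2 → ℂ) (hZ : ContDiff ℝ 1 Z) (hZper : Function.Periodic Z (2 * π))
    (heq : ∀ τ : ℝ,
      Z τ + Complex.I • (Ω.map Complex.ofReal).mulVec (Z τ) + ν • deriv Z τ = W τ) :
    ∀ τ : ℝ, enorm2 (Z τ) ≤ sSup ((fun s => enorm2 (W s)) '' Set.Icc 0 (2 * π)) := by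
  obtain ⟨t₀, ht₀, hle⟩ := exists_norm_le_of_periodic_solution
    hΩ.isSymmetric_toEuclideanLin_map_ofReal ν two_pi_pos
    (Z := fun t => toLp 2 (Z t)) (Z' := fun t => toLp 2 (deriv Z t))
    (W := fun t => toLp 2 (W t))
    (fun t => (PiLp.hasFDerivAt_toLp 2 (Z t)).comp_hasDerivAt t
      ((hZ.differentiable one_ne_zero) t).hasDerivAt)
    (fun t => by simp only [hZper t]) (fun t => by rw [← heq t]; rfl)
  have hWc' : Continuous fun s => enorm2 (W s) := by
    simp only [enorm2_eq_norm_toLp]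
    exact ((PiLp.continuous_toLp 2 _).comp hWc).norm
  intro τ
  rw [enorm2_eq_norm_toLp]
  exact (hle τ).trans (le_csSup (isCompact_Icc.image hWc').bddAbove
    ⟨t₀, ht₀, enorm2_eq_norm_toLp _⟩)

/-- A priori estimate: if `Ω` is real symmetric, `W` is
continuous and `2π`-periodic, and `Z` is `C¹`, `2π`-periodic and satisfies
`Z + iΩZ + νZ′ = W` with `ν > 0`, then `‖Z(τ)‖ ≤ sup_{s∈[0,2π]} ‖W(s)‖`. -/
theorem stmt_14 (ν : ℝ) (hν : 0 < ν)
    (Ω : Matrix (Fin 2) (Fin 2) ℝ) (hΩ : Ω.IsSymm)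
    (W : ℝ → Fin 2 → ℂ) (hWc : Continuous W) (hWper : Function.Periodic W (2 * π))
    (Z : ℝ → Fin 2 → ℂ) (hZ : ContDiff ℝ 1 Z) (hZper : Function.Periodic Z (2 * π))
    (heq : ∀ τ : ℝ,
      Z τ + Complex.I • (Ω.map Complex.ofReal).mulVec (Z τ) + ν • deriv Z τ = W τ) :
    ∀ τ : ℝ, enorm2 (Z τ) ≤ sSup ((fun s => enorm2 (W s)) '' Set.Icc 0 (2 * π)) :=
  stmt_14_general ν Ω hΩ W hWc Z hZ hZper heq
end
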